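/- Let x₀ < x₁ and y₀ ≤ y₁ be real numbers, let β = 1/2 - √3/4, and let P be a real polynomial of degree at most 3 that is monotone non-decreasing on the closed interval [x₀, x₁] with P(x₀) = y₀ and P(x₁) = y₁. Then y₀ + β·(y₁ - y₀) ≤ P((x₀ + x₁)/2) ≤ y₁ - β·(y₁ - y₀). -/

import Mathlib

/-!
For a cubic `P`, midpoint `m` and half-width `h`, a direct computation gives the exact identity
`P(m) - P(m - h) - β (P(m + h) - P(m - h)) = (√3 / 2) h P'(m - h/√3)`,
and, replacing `h` by `-h`, the mirror identity at the node `m + h/√3`. Both nodes lie inside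
`(m - h, m + h)`, where `P' ≥ 0` by monotonicity, so both sides of the claimed bound follow.
-/

open Polynomial Set

namespace Polynomial

variable {R : Type*} [CommSemiring R]

lemma eval_eq_of_degree_le_three {p : R[X]} (hp : p.degree ≤ 3) (x : R) :
    p.eval x = p.coeff 0 + p.coeff 1 * x + p.coeff 2 * x ^ 2 + p.coeff 3 * x ^ 3 := by
  rw [eval_eq_sum_range' (n := 4) (Nat.lt_succ_of_le (natDegree_le_of_degree_le hp))]
  simp only [Finset.sum_range_succ, Finset.sum_range_zero]
  ring

lemma derivative_eval_eq_of_degree_le_three {p : R[X]} (hp : p.degree ≤ 3) (x : R) :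
    p.derivative.eval x = p.coeff 1 + 2 * p.coeff 2 * x + 3 * p.coeff 3 * x ^ 2 := by
  have h4 : p.coeff 4 = 0 := coeff_eq_zero_of_degree_lt (hp.trans_lt (by norm_num))
  rw [eval_eq_of_degree_le_three (degree_derivative_le.trans hp)]
  simp only [coeff_derivative, h4]
  push_cast
  ring

open Real in
lemma eval_sub_eval_sub_mul_eq_derivative_eval {p : ℝ[X]} (hp : p.degree ≤ 3) (m h : ℝ) :
    p.eval m - p.eval (m - h) - (1 / 2 - √3 / 4) * (p.eval (m + h) - p.eval (m - h)) =
      √3 / 2 * h * p.derivative.eval (m - h * √3 / 3) := by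
  have hs : √3 ^ 2 = 3 := sq_sqrt (by norm_num)
  simp only [eval_eq_of_degree_le_three hp, derivative_eval_eq_of_degree_le_three hp]
  linear_combination
    (p.coeff 2 * h ^ 2 / 3 + p.coeff 3 * m * h ^ 2 - √3 * p.coeff 3 * h ^ 3 / 6) * hs

end Polynomial

lemma MonotoneOn.deriv_nonneg_of_mem_nhds {𝕜 : Type*} [NontriviallyNormedField 𝕜]
    [LinearOrder 𝕜] [IsStrictOrderedRing 𝕜] [OrderTopology 𝕜] {f : 𝕜 → 𝕜} {s : Set 𝕜} {x : 𝕜}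
    (hf : MonotoneOn f s) (hs : s ∈ nhds x) : 0 ≤ deriv f x :=
  derivWithin_of_mem_nhds (f := f) hs ▸ hf.derivWithin_nonneg

theorem stmt_8_general (x₀ x₁ y₀ y₁ : ℝ) (hx : x₀ < x₁)
    (β : ℝ) (hβ : β = 1 / 2 - Real.sqrt 3 / 4)
    (P : Polynomial ℝ) (hdeg : P.degree ≤ 3)
    (h0 : P.eval x₀ = y₀) (h1 : P.eval x₁ = y₁)
    (hmono : MonotoneOn (fun x => P.eval x) (Set.Icc x₀ x₁)) :
    y₀ + β * (y₁ - y₀) ≤ P.eval ((x₀ + x₁) / 2) ∧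
      P.eval ((x₀ + x₁) / 2) ≤ y₁ - β * (y₁ - y₀) := by
  subst hβ h0 h1
  obtain ⟨m, h, hh, rfl, rfl⟩ : ∃ m h : ℝ, 0 < h ∧ x₀ = m - h ∧ x₁ = m + h :=
    ⟨(x₀ + x₁) / 2, (x₁ - x₀) / 2, by linarith, by ring, by ring⟩
  rw [show (m - h + (m + h)) / 2 = m by ring]
  have hs0 : 0 < √3 := by positivity
  have hs3 : √3 < 3 := by nlinarith [Real.sq_sqrt (show (0 : ℝ) ≤ 3 by norm_num)]
  have hderiv : ∀ t ∈ Ioo (m - h) (m + h), 0 ≤ P.derivative.eval t := fun t ht =>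
    P.deriv ▸ (hmono.mono Ioo_subset_Icc_self).deriv_nonneg_of_mem_nhds (Ioo_mem_nhds ht.1 ht.2)
  have hleft := hderiv (m - h * √3 / 3) ⟨by nlinarith, by nlinarith⟩
  have hright := hderiv (m + h * √3 / 3) ⟨by nlinarith, by nlinarith⟩
  have hlow := eval_sub_eval_sub_mul_eq_derivative_eval hdeg m h
  have hup := eval_sub_eval_sub_mul_eq_derivative_eval hdeg m (-h)
  rw [sub_neg_eq_add, ← sub_eq_add_neg, show m - -h * √3 / 3 = m + h * √3 / 3 by ring] at hup
  have hw : 0 ≤ √3 / 2 * h := by positivity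
  constructor
  · linarith [mul_nonneg hw hleft]
  · linarith [mul_nonneg hw hright]

/-- scaled version of the midpoint bound: for a degree-≤3 polynomial
monotone non-decreasing on [x₀,x₁] with P(x₀)=y₀ ≤ y₁=P(x₁), the value at the
midpoint is between y₀ + β(y₁-y₀) and y₁ - β(y₁-y₀), where β = 1/2 - √3/4. -/
theorem stmt_8 (x₀ x₁ y₀ y₁ : ℝ) (hx : x₀ < x₁) (hy : y₀ ≤ y₁)
    (β : ℝ) (hβ : β = 1 / 2 - Real.sqrt 3 / 4)
    (P : Polynomial ℝ) (hdeg : P.degree ≤ 3)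
    (h0 : P.eval x₀ = y₀) (h1 : P.eval x₁ = y₁)
    (hmono : MonotoneOn (fun x => P.eval x) (Set.Icc x₀ x₁)) :
    y₀ + β * (y₁ - y₀) ≤ P.eval ((x₀ + x₁) / 2) ∧
      P.eval ((x₀ + x₁) / 2) ≤ y₁ - β * (y₁ - y₀) :=
  stmt_8_general x₀ x₁ y₀ y₁ hx β hβ P hdeg h0 h1 hmono
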